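/- Fix M ∈ ℕ. For m⃗ = (m_1,...,m_M) ∈ [−1/2,1/2]^M and j ∈ ℤ set λ_j := −j² + ∑_{k=1}^M m_k/⟨j⟩^{2k+1} with ⟨j⟩ = √(1+j²). Then there exists a set 𝒩 ⊂ [−1/2,1/2]^M of Lebesgue measure zero such that for every m⃗ ∉ 𝒩 there exist γ > 0 and N₀ > 0 with the property: for every N ≤ M, every 0 ≤ ℓ ≤ N, and every (n_1,...,n_N) ∈ ℕ^N (requiring, in the case N even and ℓ = N/2, that the multisets {n_1,...,n_ℓ} and {n_{ℓ+1},...,n_N} differ), one has |λ_{n_1} + ... + λ_{n_ℓ} − λ_{n_{ℓ+1}} − ... − λ_{n_N}| ≥ γ · max(⟨n_1⟩,...,⟨n_N⟩)^{−N₀}. -/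

import Mathlib

/-
The combination `∑_{j ≤ ℓ} λ_{n_j} - ∑_{j > ℓ} λ_{n_j}` is affine in `m`, namely `b + ∑_k m_k a_k`
with `a_k = ∑_v d_v ⟨v⟩^{-(2k+1)}`, where `d_v` is the signed multiplicity of `v` in the two
multisets. With `t_v = ⟨v⟩^{-2}` the nodes are pairwise separated by `|t_u - t_v| ≥ t_u t_v`.
Pairing the weights `d_v ⟨v⟩^{-1}` with the polynomial `x ∏_{u ≠ v₀} (x - t_u)`, which vanishes at
every node but `t_{v₀}`, forces some `|a_k| ≥ 2^{-M} X^{-4M}`, `X` the largest bracket. So for a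
fixed tuple the resonant parameters lie in a slab of the unit cube of volume
`≤ 2^{M+1} γ X^{4M-N₀} ≤ 2^{M+1} γ ∏_j ⟨n_j⟩^{-2}` once `N₀ = 6M + 1`. Since `∑_v ⟨v⟩^{-2} < ∞`,
the union over all tuples has measure `O(γ)`, and the intersection over `γ > 0` is null.
-/

open MeasureTheory

/-- Japanese bracket `⟨x⟩ = √(1+x²)`. -/
noncomputable def jap (x : ℝ) : ℝ := Real.sqrt (1 + x ^ 2)

/-- The perturbed eigenvalue `λ_j = -j² + ∑_{k=1}^M m_k/⟨j⟩^{2k+1}` (for `j ∈ ℕ`). -/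
noncomputable def lam (M : ℕ) (m : Fin M → ℝ) (j : ℕ) : ℝ :=
  -(j : ℝ) ^ 2 + ∑ k : Fin M, m k / jap (j : ℝ) ^ (2 * ((k : ℕ) + 1) + 1)

open Finset Filter
open scoped ENNReal Topology

lemma jap_sq (x : ℝ) : jap x ^ 2 = 1 + x ^ 2 := Real.sq_sqrt (by positivity)

lemma jap_pos (x : ℝ) : 0 < jap x := Real.sqrt_pos.2 (by positivity)

lemma one_le_jap (x : ℝ) : 1 ≤ jap x := Real.one_le_sqrt.2 (by nlinarith)

lemma jap_natCast_le_jap_natCast {v w : ℕ} (h : v ≤ w) : jap v ≤ jap w :=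
  Real.sqrt_le_sqrt (by gcongr)

lemma one_le_abs_natCast_sub_natCast {a b : ℕ} (h : a ≠ b) : (1 : ℝ) ≤ |(a : ℝ) - b| := by
  have : (1 : ℤ) ≤ |(a : ℤ) - b| := Int.one_le_abs (by omega)
  exact_mod_cast this

lemma inv_jap_sq_mul_le_abs_sub {u v : ℕ} (h : u ≠ v) :
    (jap u ^ 2)⁻¹ * (jap v ^ 2)⁻¹ ≤ |(jap u ^ 2)⁻¹ - (jap v ^ 2)⁻¹| := by
  have hsq : (1 : ℝ) ≤ |(v : ℝ) ^ 2 - u ^ 2| := by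
    have := one_le_abs_natCast_sub_natCast (a := v ^ 2) (b := u ^ 2)
      fun e => h (Nat.pow_left_injective two_ne_zero e).symm
    exact_mod_cast this
  have hu := jap_pos u
  have hv := jap_pos v
  have hdiff : (jap u ^ 2)⁻¹ - (jap v ^ 2)⁻¹
      = ((v : ℝ) ^ 2 - u ^ 2) * ((jap u ^ 2)⁻¹ * (jap v ^ 2)⁻¹) := by
    field_simp
    rw [jap_sq, jap_sq]
    ring
  rw [hdiff, abs_mul, abs_of_pos (by positivity : 0 < (jap u ^ 2)⁻¹ * (jap v ^ 2)⁻¹)]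
  exact le_mul_of_one_le_left (by positivity) hsq

theorem abs_mul_prod_sub_le_of_abs_moment_le {α : Type*} [DecidableEq α] {V : Finset α}
    {v₀ : α} (hv₀ : v₀ ∈ V) (c t : α → ℝ) (ht : ∀ u ∈ V, |t u| ≤ 1) {ε : ℝ}
    (hε : ∀ k < #V, |∑ v ∈ V, c v * t v ^ (k + 1)| ≤ ε) :
    |c v₀ * t v₀ * ∏ u ∈ V.erase v₀, (t v₀ - t u)| ≤ 2 ^ (#V - 1) * ε := by
  set V' := V.erase v₀
  have hcard : #V' = #V - 1 := card_erase_of_mem hv₀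
  have hexpand (x : ℝ) : x * ∏ u ∈ V', (x - t u)
      = ∑ S ∈ V'.powerset, (∏ u ∈ S, -t u) * x ^ (#V' - #S + 1) := by
    simp_rw [sub_eq_neg_add, prod_add, prod_const, mul_sum]
    refine sum_congr rfl fun S hS => ?_
    rw [card_sdiff_of_subset (mem_powerset.1 hS), pow_succ]
    ring
  have hvanish : ∑ v ∈ V, c v * (t v * ∏ u ∈ V', (t v - t u))
      = c v₀ * (t v₀ * ∏ u ∈ V', (t v₀ - t u)) := by
    rw [← insert_erase hv₀, sum_insert (notMem_erase v₀ V),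
      sum_eq_zero fun v hv => by rw [prod_eq_zero hv (sub_self _), mul_zero, mul_zero], add_zero]
  calc |c v₀ * t v₀ * ∏ u ∈ V', (t v₀ - t u)|
      = |∑ S ∈ V'.powerset, (∏ u ∈ S, -t u) * ∑ v ∈ V, c v * t v ^ (#V' - #S + 1)| := by
        simp_rw [mul_assoc, ← hvanish, hexpand, mul_sum]
        rw [sum_comm]
        congr 1
        refine sum_congr rfl fun S _ => sum_congr rfl fun v _ => by ring
    _ ≤ ∑ S ∈ V'.powerset, 1 * ε := by
        refine (abs_sum_le_sum_abs _ _).trans (sum_le_sum fun S hS => ?_)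
        rw [abs_mul]
        have hS : S ⊆ V' := mem_powerset.1 hS
        refine mul_le_mul ?_ (hε (#V' - #S) ?_) (abs_nonneg _) zero_le_one
        · rw [abs_prod]
          exact prod_le_one (fun _ _ => abs_nonneg _)
            fun u hu => by simpa using ht u (mem_of_mem_erase (hS hu))
        · have := card_pos.2 ⟨v₀, hv₀⟩
          omega
    _ = 2 ^ (#V - 1) * ε := by rw [sum_const, card_powerset, hcard, nsmul_eq_mul]; push_cast; ring

theorem Multiset.sum_map_sub_sum_map_eq_sum_count {α R : Type*} [DecidableEq α] [CommRing R]
    (A B : Multiset α) (f : α → R) :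
    (A.map f).sum - (B.map f).sum
      = ∑ v ∈ (A + B).toFinset, ((A.count v : R) - B.count v) * f v := by
  have hsum (C : Multiset α) (hC : C ≤ A + B) :
      (C.map f).sum = ∑ v ∈ (A + B).toFinset, (C.count v : R) * f v := by
    rw [sum_multiset_map_count, sum_subset (Multiset.toFinset_subset.2 (Multiset.subset_of_le hC))]
    · simp only [nsmul_eq_mul]
    · intro v _ hv
      simp [Multiset.count_eq_zero.2 (by simpa using hv)]
  rw [hsum A (Multiset.le_add_right _ _), hsum B (Multiset.le_add_left _ _), ← sum_sub_distrib]
  simp_rw [sub_mul]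

noncomputable def moment (A B : Multiset ℕ) (p : ℕ) : ℝ :=
  ∑ v ∈ (A + B).toFinset, ((A.count v : ℝ) - B.count v) * (jap v ^ (2 * p + 1))⁻¹

lemma lam_eq_lam_zero_add (M : ℕ) (m : Fin M → ℝ) (v : ℕ) :
    lam M m v = lam M 0 v + ∑ k : Fin M, m k * (jap v ^ (2 * ((k : ℕ) + 1) + 1))⁻¹ := by
  simp [lam, div_eq_mul_inv]

theorem sum_map_lam_sub_sum_map_lam (M : ℕ) (m : Fin M → ℝ) (A B : Multiset ℕ) :
    (A.map (lam M m)).sum - (B.map (lam M m)).sum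
      = (A.map (lam M 0)).sum - (B.map (lam M 0)).sum + ∑ k : Fin M, m k * moment A B (k + 1) := by
  simp_rw [Multiset.sum_map_sub_sum_map_eq_sum_count, moment, lam_eq_lam_zero_add M m, mul_add,
    sum_add_distrib, mul_sum]
  rw [sum_comm]
  congr 1
  exact sum_congr rfl fun k _ => sum_congr rfl fun v _ => by ring

theorem sum_lam_sub_sum_lam (M : ℕ) (m : Fin M → ℝ) (s t : Finset ℕ) (n : ℕ → ℕ) :
    (∑ j ∈ s, lam M m (n j)) - ∑ j ∈ t, lam M m (n j)
      = (∑ j ∈ s, lam M 0 (n j)) - (∑ j ∈ t, lam M 0 (n j))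
        + ∑ k : Fin M, m k * moment (s.val.map n) (t.val.map n) (k + 1) := by
  simpa only [Multiset.map_map, Function.comp_def, sum_map_val] using
    sum_map_lam_sub_sum_map_lam M m (s.val.map n) (t.val.map n)

lemma inv_pow_le_abs_mul_prod_sub {V : Finset ℕ} {v₀ : ℕ} (hv₀ : v₀ ∈ V) {X : ℝ}
    (hX : ∀ v ∈ V, jap v ≤ X) {d : ℝ} (hd : 1 ≤ |d|) :
    (X ^ (4 * #V - 1))⁻¹ ≤
      |d * (jap v₀)⁻¹ * (jap v₀ ^ 2)⁻¹ * ∏ u ∈ V.erase v₀, ((jap v₀ ^ 2)⁻¹ - (jap u ^ 2)⁻¹)| := by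
  have hX0 : 0 < X := (jap_pos _).trans_le (hX v₀ hv₀)
  have hv₀pos := jap_pos v₀
  have hinv (v : ℕ) (hv : v ∈ V) : X⁻¹ ≤ (jap v)⁻¹ := inv_anti₀ (jap_pos _) (hX v hv)
  have hinv_sq (v : ℕ) (hv : v ∈ V) : (X ^ 2)⁻¹ ≤ (jap v ^ 2)⁻¹ := by
    rw [← inv_pow, ← inv_pow]
    exact pow_le_pow_left₀ (by positivity) (hinv v hv) 2
  have hgap (u : ℕ) (hu : u ∈ V.erase v₀) : (X ^ 4)⁻¹ ≤ |(jap v₀ ^ 2)⁻¹ - (jap u ^ 2)⁻¹| := by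
    calc (X ^ 4)⁻¹ = (X ^ 2)⁻¹ * (X ^ 2)⁻¹ := by rw [← mul_inv, ← pow_add]
      _ ≤ (jap v₀ ^ 2)⁻¹ * (jap u ^ 2)⁻¹ :=
        mul_le_mul (hinv_sq v₀ hv₀) (hinv_sq u (mem_of_mem_erase hu)) (by positivity)
          (by positivity)
      _ ≤ _ := inv_jap_sq_mul_le_abs_sub (ne_of_mem_erase hu).symm
  have hcard : #(V.erase v₀) = #V - 1 := card_erase_of_mem hv₀
  have hpos : 0 < #V := card_pos.2 ⟨v₀, hv₀⟩
  calc (X ^ (4 * #V - 1))⁻¹ = 1 * X⁻¹ * (X ^ 2)⁻¹ * ∏ _u ∈ V.erase v₀, (X ^ 4)⁻¹ := by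
        rw [prod_const, hcard, show 4 * #V - 1 = 4 * (#V - 1) + 3 by omega]
        ring
    _ ≤ |d| * (jap v₀)⁻¹ * (jap v₀ ^ 2)⁻¹ * ∏ u ∈ V.erase v₀, |(jap v₀ ^ 2)⁻¹ - (jap u ^ 2)⁻¹| := by
        gcongr ?_ * ?_ * ?_ * ?_
        exacts [hinv v₀ hv₀, hinv_sq v₀ hv₀, prod_le_prod (fun _ _ => by positivity) hgap]
    _ = _ := by
        rw [abs_mul, abs_mul, abs_mul, abs_prod, abs_of_pos (by positivity : 0 < (jap v₀)⁻¹),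
          abs_of_pos (by positivity : 0 < (jap v₀ ^ 2)⁻¹)]

theorem exists_le_abs_moment {M : ℕ} {A B : Multiset ℕ} (hAB : A ≠ B)
    (hcard : Multiset.card (A + B) ≤ M) {X : ℝ} (hX : ∀ v ∈ A + B, jap v ≤ X) :
    ∃ k : Fin M, (2 ^ M * X ^ (4 * M))⁻¹ ≤ |moment A B (k + 1)| := by
  set V := (A + B).toFinset
  obtain ⟨v₀, hv₀⟩ : ∃ v, A.count v ≠ B.count v := by
    contrapose! hAB
    exact Multiset.ext.2 hAB
  have hv₀V : v₀ ∈ V := by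
    rw [Multiset.mem_toFinset, ← Multiset.count_pos, Multiset.count_add]
    omega
  have hVX : ∀ v ∈ V, jap v ≤ X := fun v hv => hX v (Multiset.mem_toFinset.1 hv)
  have hX1 : 1 ≤ X := (one_le_jap _).trans (hVX v₀ hv₀V)
  have hVM : #V ≤ M := (Multiset.toFinset_card_le _).trans hcard
  have hV : 0 < #V := card_pos.2 ⟨v₀, hv₀V⟩
  have hmoment (p : ℕ) : moment A B (p + 1) = ∑ v ∈ V,
      ((A.count v : ℝ) - B.count v) * (jap v)⁻¹ * (jap v ^ 2)⁻¹ ^ (p + 1) :=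
    sum_congr rfl fun v _ => by rw [pow_succ, pow_mul, mul_inv, inv_pow]; ring
  have hlow := inv_pow_le_abs_mul_prod_sub hv₀V hVX (one_le_abs_natCast_sub_natCast hv₀)
  by_contra! hsmall
  have hup := abs_mul_prod_sub_le_of_abs_moment_le hv₀V
    (fun v => ((A.count v : ℝ) - B.count v) * (jap v)⁻¹) (fun v => (jap v ^ 2)⁻¹)
    (fun u _ => by
      rw [abs_of_pos (inv_pos.2 (pow_pos (jap_pos _) 2))]
      exact inv_le_one_of_one_le₀ (one_le_pow₀ (one_le_jap _)))
    (ε := (2 ^ M * X ^ (4 * M))⁻¹) fun k hk => by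
      rw [← hmoment]; exact (hsmall ⟨k, by omega⟩).le
  have h2 : (2 : ℝ) ^ (#V - 1) * (2 ^ M)⁻¹ < 1 := by
    rw [mul_inv_lt_iff₀ (by positivity), one_mul]
    exact pow_lt_pow_right₀ one_lt_two (by omega)
  have hXpow : (X ^ (4 * M))⁻¹ ≤ (X ^ (4 * #V - 1))⁻¹ :=
    inv_anti₀ (by positivity) (pow_le_pow_right₀ hX1 (by omega))
  rw [mul_inv, ← mul_assoc] at hup
  linarith [mul_lt_mul_of_pos_right h2 (by positivity : (0 : ℝ) < (X ^ (4 * M))⁻¹)]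

def cube (ι : Type*) : Set (ι → ℝ) := Set.univ.pi fun _ => Set.Icc (-(1 / 2) : ℝ) (1 / 2)

lemma volume_cube (ι : Type*) [Fintype ι] : volume (cube ι) = 1 := by
  simp only [cube, volume_pi_pi, Real.volume_Icc]
  norm_num

lemma measurableSet_cube (ι : Type*) [Fintype ι] : MeasurableSet (cube ι) :=
  MeasurableSet.univ_pi fun _ => measurableSet_Icc

lemma volume_setOf_abs_add_mul_le (c a δ : ℝ) (ha : a ≠ 0) :
    volume {x : ℝ | |c + x * a| ≤ δ} = ENNReal.ofReal (2 * δ / |a|) := by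
  have : {x : ℝ | |c + x * a| ≤ δ} = (· * a) ⁻¹' Set.Icc (-δ - c) (δ - c) := by
    ext x
    simp only [Set.mem_ofPred_eq, Set.mem_preimage, Set.mem_Icc, abs_le]
    constructor <;> rintro ⟨h₁, h₂⟩ <;> constructor <;> linarith
  rw [this, Real.volume_preimage_mul_right ha, Real.volume_Icc, ← ENNReal.ofReal_mul (abs_nonneg _),
    abs_inv]
  congr 1
  ring

theorem volume_cube_inter_abs_affine_le {M : ℕ} (a : Fin M → ℝ) (b δ : ℝ) {k : Fin M}
    (hk : a k ≠ 0) :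
    volume (cube (Fin M) ∩ {m | |b + ∑ i, m i * a i| ≤ δ}) ≤ ENNReal.ofReal (2 * δ / |a k|) := by
  obtain ⟨n, rfl⟩ : ∃ n, M = n + 1 := ⟨M - 1, by have := k.pos; omega⟩
  set c : (Fin n → ℝ) → ℝ := fun y => b + ∑ j, y j * a (k.succAbove j)
  set T : Set (ℝ × (Fin n → ℝ)) := {p | p.2 ∈ cube (Fin n) ∧ |c p.2 + p.1 * a k| ≤ δ}
  have hT : MeasurableSet T :=
    (measurable_snd (measurableSet_cube _)).inter
      (measurableSet_le (f := fun p : ℝ × (Fin n → ℝ) => |c p.2 + p.1 * a k|) (by fun_prop)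
        measurable_const)
  have hsub : cube (Fin (n + 1)) ∩ {m | |b + ∑ i, m i * a i| ≤ δ}
      ⊆ MeasurableEquiv.piFinSuccAbove (fun _ => ℝ) k ⁻¹' T := by
    rintro m ⟨hm, hδ⟩
    refine ⟨fun j _ => hm _ (Set.mem_univ _), ?_⟩
    simpa [c, Fin.sum_univ_succAbove _ k, Fin.removeNth, add_comm, add_left_comm, add_assoc]
      using hδ
  have hslice (y : Fin n → ℝ) : volume ((fun x => (x, y)) ⁻¹' T)
      = (cube (Fin n)).indicator (fun _ => ENNReal.ofReal (2 * δ / |a k|)) y := by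
    by_cases hy : y ∈ cube (Fin n)
    · rw [Set.indicator_of_mem hy, ← volume_setOf_abs_add_mul_le (c y) (a k) δ hk]
      congr 1
      ext x
      simp [T, hy]
    · simp [T, hy]
  calc _ ≤ volume (MeasurableEquiv.piFinSuccAbove (fun _ => ℝ) k ⁻¹' T) := measure_mono hsub
    _ = (volume.prod volume) T :=
        (volume_preserving_piFinSuccAbove (fun _ => ℝ) k).measure_preimage_equiv T
    _ = ENNReal.ofReal (2 * δ / |a k|) := by
        rw [Measure.prod_apply_symm hT, lintegral_congr hslice,
          lintegral_indicator (measurableSet_cube _), setLIntegral_const, volume_cube, mul_one]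

lemma pow_mul_rpow_neg_le_prod_inv_jap_sq {s : Finset ℕ} {f : ℕ → ℕ} {X τ : ℝ} {c : ℕ}
    (hX1 : 1 ≤ X) (hX : ∀ j ∈ s, jap (f j) ≤ X) (hτ : c + 2 * #s ≤ τ) :
    X ^ c * X ^ (-τ) ≤ ∏ j ∈ s, (jap (f j) ^ 2)⁻¹ := by
  have hX0 : 0 < X := one_pos.trans_le hX1
  calc X ^ c * X ^ (-τ) = X ^ (-(τ - c)) := by
        rw [← Real.rpow_natCast, ← Real.rpow_add hX0]
        ring_nf
    _ ≤ X ^ (-(2 * #s : ℕ) : ℝ) :=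
        Real.rpow_le_rpow_of_exponent_le hX1 (by push_cast; linarith)
    _ = ∏ _j ∈ s, (X ^ 2)⁻¹ := by
        rw [Real.rpow_neg hX0.le, Real.rpow_natCast, prod_const]
        ring
    _ ≤ ∏ j ∈ s, (jap (f j) ^ 2)⁻¹ :=
        prod_le_prod (fun _ _ => by positivity) fun j hj =>
          inv_anti₀ (pow_pos (jap_pos _) 2) (pow_le_pow_left₀ (jap_pos _).le (hX j hj) 2)

lemma map_Icc_add_map_Icc {ℓ N : ℕ} (hℓ : ℓ ≤ N) (n : ℕ → ℕ) :
    Multiset.map n (Icc 1 ℓ).val + Multiset.map n (Icc (ℓ + 1) N).val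
      = Multiset.map n (Icc 1 N).val := by
  have hdisj : Disjoint (Icc 1 ℓ) (Icc (ℓ + 1) N) := disjoint_left.2 fun j h₁ h₂ => by
    simp only [mem_Icc] at h₁ h₂
    omega
  have hunion : (Icc 1 ℓ).disjUnion (Icc (ℓ + 1) N) hdisj = Icc 1 N := by
    ext j
    simp only [disjUnion_eq_union, mem_union, mem_Icc]
    omega
  rw [← Multiset.map_add, ← hunion, disjUnion_val]

def resonantSet (M : ℕ) (γ τ : ℝ) (ℓ N : ℕ) (n : ℕ → ℕ) : Set (Fin M → ℝ) :=
  {m | Multiset.map n (Icc 1 ℓ).val ≠ Multiset.map n (Icc (ℓ + 1) N).val ∧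
    |(∑ j ∈ Icc 1 ℓ, lam M m (n j)) - ∑ j ∈ Icc (ℓ + 1) N, lam M m (n j)|
      < γ * jap ((Icc 1 N).sup n : ℕ) ^ (-τ)}

theorem volume_cube_inter_resonantSet_le {M : ℕ} {γ τ : ℝ} (hγ : 0 ≤ γ) {ℓ N : ℕ} (hℓ : ℓ ≤ N)
    (hN : N ≤ M) (hτ : 4 * M + 2 * N ≤ τ) (n : ℕ → ℕ) :
    volume (cube (Fin M) ∩ resonantSet M γ τ ℓ N n)
      ≤ 2 ^ (M + 1) * ENNReal.ofReal γ * ∏ j ∈ Icc 1 N, ENNReal.ofReal ((jap (n j) ^ 2)⁻¹) := by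
  set A := Multiset.map n (Icc 1 ℓ).val
  set B := Multiset.map n (Icc (ℓ + 1) N).val
  by_cases hAB : A = B
  · simp [resonantSet, A, B, hAB]
  set X := jap ((Icc 1 N).sup n : ℕ)
  have hX1 : 1 ≤ X := one_le_jap _
  have hjapX : ∀ j ∈ Icc 1 N, jap (n j) ≤ X := fun j hj =>
    jap_natCast_le_jap_natCast (le_sup (f := n) hj)
  have hunion : A + B = Multiset.map n (Icc 1 N).val := map_Icc_add_map_Icc hℓ n
  have hX : ∀ v ∈ A + B, jap v ≤ X := by
    simpa only [hunion, Multiset.forall_mem_map_iff, mem_val] using hjapX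
  have hcard : Multiset.card (A + B) ≤ M := by
    rwa [hunion, Multiset.card_map, card_val, Nat.card_Icc, Nat.add_sub_cancel]
  obtain ⟨k, hk⟩ := exists_le_abs_moment hAB hcard hX
  set a : Fin M → ℝ := fun i => moment A B (i + 1)
  set b := (∑ j ∈ Icc 1 ℓ, lam M 0 (n j)) - ∑ j ∈ Icc (ℓ + 1) N, lam M 0 (n j)
  have hsub : cube (Fin M) ∩ resonantSet M γ τ ℓ N n
      ⊆ cube (Fin M) ∩ {m | |b + ∑ i, m i * a i| ≤ γ * X ^ (-τ)} := by
    rintro m ⟨hm, -, hlt⟩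
    exact ⟨hm, (sum_lam_sub_sum_lam M m _ _ n ▸ hlt).le⟩
  have hα : 0 < (2 ^ M * X ^ (4 * M))⁻¹ := by positivity
  have hprod : X ^ (4 * M) * X ^ (-τ) ≤ ∏ j ∈ Icc 1 N, (jap (n j) ^ 2)⁻¹ :=
    pow_mul_rpow_neg_le_prod_inv_jap_sq hX1 hjapX (by simp only [Nat.card_Icc]; push_cast; linarith)
  calc _ ≤ _ := measure_mono hsub
    _ ≤ ENNReal.ofReal (2 * (γ * X ^ (-τ)) / |a k|) :=
        volume_cube_inter_abs_affine_le a b _ (abs_pos.1 (hα.trans_le hk))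
    _ ≤ ENNReal.ofReal (2 ^ (M + 1) * γ * ∏ j ∈ Icc 1 N, (jap (n j) ^ 2)⁻¹) := by
        refine ENNReal.ofReal_le_ofReal ?_
        calc 2 * (γ * X ^ (-τ)) / |a k| ≤ 2 * (γ * X ^ (-τ)) / (2 ^ M * X ^ (4 * M))⁻¹ :=
              div_le_div_of_nonneg_left (by positivity) hα hk
          _ = 2 ^ (M + 1) * γ * (X ^ (4 * M) * X ^ (-τ)) := by
                rw [div_inv_eq_mul]; ring
          _ ≤ _ := by gcongr
    _ = _ := by
        rw [ENNReal.ofReal_mul (by positivity), ENNReal.ofReal_mul (by positivity),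
          ENNReal.ofReal_pow zero_le_two, ENNReal.ofReal_prod_of_nonneg fun _ _ => by positivity]
        norm_num

theorem ENNReal.tsum_fin_pi_prod {α : Type*} (q : α → ℝ≥0∞) (N : ℕ) :
    ∑' ν : Fin N → α, ∏ i, q (ν i) = (∑' a, q a) ^ N := by
  induction N with
  | zero => simp
  | succ N ih =>
    rw [← (Fin.consEquiv fun _ => α).tsum_eq, ENNReal.tsum_prod', pow_succ', ← ih,
      ← ENNReal.tsum_mul_right]
    simp [Fin.prod_univ_succ, ENNReal.tsum_mul_left]

theorem ENNReal.tsum_pi_prod {ι α : Type*} [Fintype ι] (q : α → ℝ≥0∞) :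
    ∑' ν : ι → α, ∏ i, q (ν i) = (∑' a, q a) ^ Fintype.card ι := by
  let e := Fintype.equivFin ι
  rw [← (e.symm.arrowCongr (Equiv.refl α)).tsum_eq, ← ENNReal.tsum_fin_pi_prod]
  exact tsum_congr fun ν => Fintype.prod_equiv e _ _ fun i => by simp

lemma summable_inv_jap_sq : Summable fun v : ℕ => (jap v ^ 2)⁻¹ := by
  have hsq := (Real.summable_one_div_nat_pow.2 one_lt_two).comp_injective (add_left_injective 1)
  refine (summable_nat_add_iff 1).1 <| hsq.of_nonneg_of_le (fun _ => by positivity) fun v => ?_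
  rw [jap_sq, Function.comp_apply, one_div]
  gcongr
  push_cast
  linarith

lemma tsum_ofReal_inv_jap_sq_ne_top : ∑' v : ℕ, ENNReal.ofReal ((jap v ^ 2)⁻¹) ≠ ⊤ := by
  rw [← ENNReal.ofReal_tsum_of_nonneg (fun _ => by positivity) summable_inv_jap_sq]
  exact ENNReal.ofReal_ne_top

lemma resonantSet_congr {M : ℕ} {γ τ : ℝ} {ℓ N : ℕ} (hℓ : ℓ ≤ N) {n n' : ℕ → ℕ}
    (h : ∀ j ∈ Icc 1 N, n j = n' j) : resonantSet M γ τ ℓ N n = resonantSet M γ τ ℓ N n' := by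
  have h₁ (j : ℕ) (hj : j ∈ Icc 1 ℓ) : n j = n' j := h j (Icc_subset_Icc_right hℓ hj)
  have h₂ (j : ℕ) (hj : j ∈ Icc (ℓ + 1) N) : n j = n' j :=
    h j (Icc_subset_Icc_left (Nat.le_add_left 1 ℓ) hj)
  have hA : Multiset.map n (Icc 1 ℓ).val = Multiset.map n' (Icc 1 ℓ).val :=
    Multiset.map_congr rfl h₁
  have hB : Multiset.map n (Icc (ℓ + 1) N).val = Multiset.map n' (Icc (ℓ + 1) N).val :=
    Multiset.map_congr rfl h₂
  ext m
  simp only [resonantSet, Set.mem_ofPred_eq, sup_congr rfl h, hA, hB,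
    sum_congr rfl fun j hj => congrArg (lam M m) (h₁ j hj),
    sum_congr rfl fun j hj => congrArg (lam M m) (h₂ j hj)]

-- A countable union: by `resonantSet_congr` only the values of `n` on `Icc 1 N` matter.
def exceptionalSet (M : ℕ) (γ : ℝ) : Set (Fin M → ℝ) :=
  ⋃ N ∈ range (M + 1), ⋃ ℓ ∈ range (N + 1), ⋃ ν : Icc 1 N → ℕ,
    cube (Fin M) ∩ resonantSet M γ (6 * M + 1) ℓ N (Function.extend Subtype.val ν 0)

lemma cube_inter_resonantSet_subset_exceptionalSet {M : ℕ} {γ : ℝ} {ℓ N : ℕ} (hℓ : ℓ ≤ N)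
    (hN : N ≤ M) (n : ℕ → ℕ) :
    cube (Fin M) ∩ resonantSet M γ (6 * M + 1) ℓ N n ⊆ exceptionalSet M γ := by
  intro m hm
  simp only [exceptionalSet, Set.mem_iUnion, mem_range]
  refine ⟨N, by omega, ℓ, by omega, fun j => n j, ?_⟩
  rwa [resonantSet_congr hℓ fun j hj =>
    Subtype.val_injective.extend_apply (fun j : Icc 1 N => n j) 0 ⟨j, hj⟩]

theorem exists_volume_exceptionalSet_le (M : ℕ) :
    ∃ C : ℝ≥0∞, C ≠ ⊤ ∧ ∀ γ : ℝ, 0 ≤ γ → volume (exceptionalSet M γ) ≤ ENNReal.ofReal γ * C := by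
  set Q := ∑' v : ℕ, ENNReal.ofReal ((jap v ^ 2)⁻¹)
  refine ⟨∑ N ∈ range (M + 1), ∑ ℓ ∈ range (N + 1), 2 ^ (M + 1) * Q ^ N, ?_, fun γ hγ => ?_⟩
  · exact ENNReal.sum_ne_top.2 fun N _ => ENNReal.sum_ne_top.2 fun ℓ _ =>
      ENNReal.mul_ne_top (by simp) (ENNReal.pow_ne_top tsum_ofReal_inv_jap_sq_ne_top)
  rw [mul_sum]
  refine (measure_biUnion_finset_le _ _).trans (sum_le_sum fun N hN => ?_)
  rw [mul_sum]
  refine (measure_biUnion_finset_le _ _).trans (sum_le_sum fun ℓ hℓ => ?_)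
  rw [mem_range] at hN hℓ
  refine (measure_iUnion_le _).trans ?_
  calc _ ≤ ∑' ν : Icc 1 N → ℕ, 2 ^ (M + 1) * ENNReal.ofReal γ *
          ∏ j : Icc 1 N, ENNReal.ofReal ((jap (ν j) ^ 2)⁻¹) := by
        refine ENNReal.tsum_le_tsum fun ν => ?_
        refine (volume_cube_inter_resonantSet_le hγ (by omega) (by omega) ?_ _).trans_eq ?_
        · have : (N : ℝ) ≤ M := by exact_mod_cast (by omega : N ≤ M)
          linarith
        · rw [← prod_coe_sort]
          simp only [Subtype.val_injective.extend_apply]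
    _ = ENNReal.ofReal γ * (2 ^ (M + 1) * Q ^ N) := by
        rw [ENNReal.tsum_mul_left, ENNReal.tsum_pi_prod fun v : ℕ => ENNReal.ofReal ((jap v ^ 2)⁻¹),
          Fintype.card_coe, Nat.card_Icc, Nat.add_sub_cancel]
        ring

lemma ENNReal.eq_zero_of_forall_le_ofReal_mul {x C : ℝ≥0∞} (hC : C ≠ ⊤)
    (h : ∀ γ : ℝ, 0 < γ → x ≤ ENNReal.ofReal γ * C) : x = 0 := by
  have hlim : Tendsto (fun γ => ENNReal.ofReal γ * C) (𝓝[>] 0) (𝓝 0) := by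
    have hid : Tendsto (fun γ : ℝ => γ) (𝓝[>] 0) (𝓝 0) :=
      tendsto_nhdsWithin_of_tendsto_nhds tendsto_id
    simpa using ENNReal.Tendsto.mul_const (ENNReal.tendsto_ofReal hid) (Or.inr hC)
  exact le_antisymm (ge_of_tendsto hlim (eventually_nhdsWithin_of_forall h)) bot_le

/-- Non-resonance condition: outside a zero-measure set `𝒩` of parameters
`m⃗ ∈ [-1/2,1/2]^M`, there are `γ > 0` and `N₀ > 0` such that for every `N ≤ M`, every
`0 ≤ ℓ ≤ N` and every `(n_1,…,n_N) ∈ ℕ^N` (with the multisets `{n_1,…,n_ℓ}`,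
`{n_{ℓ+1},…,n_N}` required to differ when `2ℓ = N`), one has
`|λ_{n_1}+⋯+λ_{n_ℓ}−λ_{n_{ℓ+1}}−⋯−λ_{n_N}| ≥ γ · max(⟨n_1⟩,…,⟨n_N⟩)^{-N₀}`. -/
theorem nonresonance (M : ℕ) :
    ∃ 𝒩 : Set (Fin M → ℝ),
      𝒩 ⊆ Set.univ.pi (fun _ => Set.Icc (-(1/2) : ℝ) (1/2)) ∧
      volume 𝒩 = 0 ∧
      ∀ m ∈ Set.univ.pi (fun _ => Set.Icc (-(1/2) : ℝ) (1/2)), m ∉ 𝒩 →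
        ∃ γ : ℝ, 0 < γ ∧ ∃ N₀ : ℝ, 0 < N₀ ∧
          ∀ N : ℕ, N ≤ M → ∀ ℓ : ℕ, ℓ ≤ N → ∀ n : ℕ → ℕ,
            (2 * ℓ = N →
              Multiset.map n (Finset.Icc 1 ℓ).val ≠ Multiset.map n (Finset.Icc (ℓ + 1) N).val) →
            γ * jap (((Finset.Icc 1 N).sup n : ℕ) : ℝ) ^ (-N₀) ≤
              |(∑ j ∈ Finset.Icc 1 ℓ, lam M m (n j))
                - ∑ j ∈ Finset.Icc (ℓ + 1) N, lam M m (n j)| := by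
  obtain ⟨C, hC, hvol⟩ := exists_volume_exceptionalSet_le M
  refine ⟨cube (Fin M) ∩ ⋂ γ > 0, exceptionalSet M γ, Set.inter_subset_left, ?_, ?_⟩
  · refine ENNReal.eq_zero_of_forall_le_ofReal_mul hC fun γ hγ => ?_
    exact (measure_mono (Set.inter_subset_right.trans (Set.biInter_subset_of_mem hγ))).trans
      (hvol γ hγ.le)
  intro m hm hm𝒩
  obtain ⟨γ, hγ, hmγ⟩ : ∃ γ > 0, m ∉ exceptionalSet M γ := by
    by_contra! h
    exact hm𝒩 ⟨hm, Set.mem_iInter₂.2 h⟩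
  refine ⟨γ, hγ, 6 * M + 1, by positivity, fun N hN ℓ hℓ n hne => ?_⟩
  by_contra! hlt
  refine hmγ (cube_inter_resonantSet_subset_exceptionalSet hℓ hN n ⟨hm, fun hAB => ?_, hlt⟩)
  have hcard := congrArg Multiset.card hAB
  simp only [Multiset.card_map, card_val, Nat.card_Icc] at hcard
  exact hne (by omega) hAB
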